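/- arXiv:2404.07210 — 3 statements merged into one kernel-verified Lean document; each statement's English description precedes it below -/
import Mathlib

section
/- Let 2 ≤ p < ∞, let (Ω, μ) be a probability space, let D_N = {φ_1, …, φ_N} ⊂ C(Ω) and suppose D_N satisfies the 2v-term Nikol'skii inequality: ‖g‖_{L_p(μ)} ≤ H ‖g‖_{L_2(μ)} for all g ∈ Σ_{2v}(D_N). Suppose ξ = {ξ^1, …, ξ^m} ⊆ Ω provides the one-sided L_2-universal discretization ‖g‖_{L_2(μ)} ≤ D ((1/m) ∑_j |g(ξ^j)|²)^{1/2} for all g ∈ Σ_{2v}(D_N). Let f ∈ C(Ω) and let B be any element of Σ_v(D_N) achieving the best v-term approximation of f in the discrete norm L_2(ξ), i.e., ‖f − B‖_{L_2(μ_m)} = σ_v(f, D_N)_{L_2(μ_m)}. Then ‖f − B‖_{L_p(Ω,μ)} ≤ (2DH + 1) σ_v(f, D_N)_∞, where σ_v(f, D_N)_∞ = inf_{g ∈ Σ_v(D_N)} ‖f − g‖_∞. -/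
/-!
Fix `g ∈ Σ_v` and put `r = ‖f - g‖_∞`. Since `B` is a best approximant in `L₂(ξ)`,
`‖g - B‖_{L₂(ξ)} ≤ ‖g - f‖_{L₂(ξ)} + ‖f - B‖_{L₂(ξ)} ≤ 2 ‖f - g‖_{L₂(ξ)} ≤ 2r`.
As `g - B ∈ Σ_{2v}`, the Nikol'skii inequality and the discretization bound give
`‖g - B‖_p ≤ H ‖g - B‖_2 ≤ 2DHr`, hence `‖f - B‖_p ≤ ‖f - g‖_p + ‖g - B‖_p ≤ (2DH + 1) r`;
now take the infimum over `g`.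
-/

open MeasureTheory Finset
open scoped ENNReal

/-- The norm of `L₂(μ_m)`, for `μ_m` the uniform probability measure on the points `ξ j`. -/
noncomputable def discreteL2Norm {Ω E : Type*} [Norm E] {m : ℕ} (ξ : Fin m → Ω) (g : Ω → E) :
    ℝ :=
  Real.sqrt ((1 / m) * ∑ j, ‖g (ξ j)‖ ^ 2)

section discreteL2Norm

variable {Ω E : Type*} [SeminormedAddCommGroup E] {m : ℕ} (ξ : Fin m → Ω)

theorem discreteL2Norm_eq_mul_norm_toLp (g : Ω → E) :
    discreteL2Norm ξ g =
      Real.sqrt (1 / m) * ‖WithLp.toLp 2 (fun j => g (ξ j) : Fin m → E)‖ := by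
  rw [discreteL2Norm, PiLp.norm_eq_of_L2, Real.sqrt_mul (by positivity)]

theorem discreteL2Norm_sub_le (f g h : Ω → E) :
    discreteL2Norm ξ (f - h) ≤ discreteL2Norm ξ (f - g) + discreteL2Norm ξ (g - h) := by
  simp only [discreteL2Norm_eq_mul_norm_toLp, ← mul_add]
  gcongr
  exact norm_sub_le_norm_sub_add_norm_sub
    (WithLp.toLp 2 fun j => f (ξ j)) (WithLp.toLp 2 fun j => g (ξ j))
    (WithLp.toLp 2 fun j => h (ξ j))

theorem discreteL2Norm_le_of_forall_norm_le {g : Ω → E} {r : ℝ} (hr : 0 ≤ r)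
    (hg : ∀ x, ‖g x‖ ≤ r) : discreteL2Norm ξ g ≤ r := by
  rw [discreteL2Norm, Real.sqrt_le_left hr]
  calc (1 / m : ℝ) * ∑ j, ‖g (ξ j)‖ ^ 2 ≤ (1 / m) * ∑ _j : Fin m, r ^ 2 := by
        gcongr with j; exact hg _
    _ = (m / m : ℝ) * r ^ 2 := by
      rw [sum_const, card_univ, Fintype.card_fin, nsmul_eq_mul]; ring
    _ ≤ r ^ 2 := mul_le_of_le_one_left (sq_nonneg r) (div_self_le_one _)

theorem discreteL2Norm_sub_le_two_mul {f g B : Ω → E} {r : ℝ} (hr : 0 ≤ r)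
    (hfg : ∀ x, ‖f x - g x‖ ≤ r) (hB : discreteL2Norm ξ (f - B) ≤ discreteL2Norm ξ (f - g)) :
    discreteL2Norm ξ (g - B) ≤ 2 * r := by
  have hgf : discreteL2Norm ξ (g - f) ≤ r :=
    discreteL2Norm_le_of_forall_norm_le ξ hr fun x => by simpa [norm_sub_rev] using hfg x
  have hfg' : discreteL2Norm ξ (f - g) ≤ r := discreteL2Norm_le_of_forall_norm_le ξ hr hfg
  linarith [discreteL2Norm_sub_le ξ g f B]

end discreteL2Norm

/-- `Σ_u(φ)`: the linear combinations of at most `u` of the functions `φ i`. -/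
def sparseSpan {ι Ω R : Type*} [Semiring R] (φ : ι → Ω → R) (u : ℕ) : Set (Ω → R) :=
  {g | ∃ Q : Finset ι, ∃ c : ι → R, Q.card ≤ u ∧ g = fun x => ∑ j ∈ Q, c j * φ j x}

section sparseSpan

variable {ι Ω R : Type*} {φ : ι → Ω → R}

theorem zero_mem_sparseSpan [Semiring R] (u : ℕ) : 0 ∈ sparseSpan φ u :=
  ⟨∅, 0, by simp, by ext; simp⟩

theorem sub_mem_sparseSpan [Ring R] {g h : Ω → R} {u w : ℕ} (hg : g ∈ sparseSpan φ u)
    (hh : h ∈ sparseSpan φ w) : g - h ∈ sparseSpan φ (u + w) := by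
  classical
  obtain ⟨Q₁, c₁, hQ₁, rfl⟩ := hg
  obtain ⟨Q₂, c₂, hQ₂, rfl⟩ := hh
  refine ⟨Q₁ ∪ Q₂, fun j => (if j ∈ Q₁ then c₁ j else 0) - (if j ∈ Q₂ then c₂ j else 0),
    (card_union_le _ _).trans (add_le_add hQ₁ hQ₂), ?_⟩
  funext x
  simp only [Pi.sub_apply, sub_mul, ite_mul, zero_mul, sum_sub_distrib, sum_ite_mem,
    union_inter_cancel_left, union_inter_cancel_right]

theorem continuous_of_mem_sparseSpan [Semiring R] [TopologicalSpace Ω] [TopologicalSpace R]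
    [IsTopologicalSemiring R] (hφ : ∀ i, Continuous (φ i)) {g : Ω → R} {u : ℕ}
    (hg : g ∈ sparseSpan φ u) : Continuous g := by
  obtain ⟨Q, c, -, rfl⟩ := hg
  exact continuous_finsetSum _ fun j _ => continuous_const.mul (hφ j)

end sparseSpan

theorem norm_le_iSup_norm {Ω E : Type*} [TopologicalSpace Ω] [CompactSpace Ω]
    [SeminormedAddCommGroup E] {g : Ω → E} (hg : Continuous g) (x : Ω) : ‖g x‖ ≤ ⨆ y, ‖g y‖ :=
  le_ciSup (isCompact_range hg.norm).bddAbove x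

theorem eLpNorm_le_ofReal_of_forall_norm_le {Ω E : Type*} [MeasurableSpace Ω]
    {μ : Measure Ω} [IsProbabilityMeasure μ] [NormedAddCommGroup E] (p : ℝ≥0∞) {g : Ω → E}
    {r : ℝ} (hg : ∀ x, ‖g x‖ ≤ r) : eLpNorm g p μ ≤ ENNReal.ofReal r := by
  simpa using eLpNorm_le_of_ae_bound (μ := μ) (p := p) (ae_of_all _ hg)

theorem le_ofReal_mul_csInf {S : Set ℝ} (hne : S.Nonempty) (hbdd : BddBelow S) {c : ℝ}
    (hc : 0 ≤ c) {a : ℝ≥0∞} (h : ∀ r ∈ S, a ≤ ENNReal.ofReal (c * r)) :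
    a ≤ ENNReal.ofReal (c * sInf S) := by
  have hmono : Monotone fun r => ENNReal.ofReal (c * r) := fun _ _ hrs =>
    ENNReal.ofReal_le_ofReal (mul_le_mul_of_nonneg_left hrs hc)
  have hcont : Continuous fun r => ENNReal.ofReal (c * r) :=
    ENNReal.continuous_ofReal.comp (continuous_const_mul c)
  rw [hmono.map_csInf_of_continuousAt hcont.continuousAt hne hbdd]
  exact le_sInf <| by rintro _ ⟨r, hr, rfl⟩; exact h r hr

theorem eLpNorm_sub_le_of_discreteL2Norm_le {Ω E : Type*} [MeasurableSpace Ω]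
    {μ : Measure Ω} [IsProbabilityMeasure μ] [NormedAddCommGroup E] {m : ℕ} (ξ : Fin m → Ω)
    {p : ℝ≥0∞} (hp : 1 ≤ p) {f g B : Ω → E} (hfg_meas : AEStronglyMeasurable (f - g) μ)
    (hgB_meas : AEStronglyMeasurable (g - B) μ) {r H D : ℝ} (hr : 0 ≤ r) (hH : 0 ≤ H) (hD : 0 ≤ D)
    (hfg : ∀ x, ‖f x - g x‖ ≤ r)
    (hNik : eLpNorm (g - B) p μ ≤ ENNReal.ofReal H * eLpNorm (g - B) 2 μ)
    (hdisc : eLpNorm (g - B) 2 μ ≤ ENNReal.ofReal (D * discreteL2Norm ξ (g - B)))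
    (hbest : discreteL2Norm ξ (f - B) ≤ discreteL2Norm ξ (f - g)) :
    eLpNorm (f - B) p μ ≤ ENNReal.ofReal ((2 * D * H + 1) * r) := by
  have hgB_le : eLpNorm (g - B) p μ ≤ ENNReal.ofReal (H * (D * (2 * r))) := calc
    _ ≤ ENNReal.ofReal H * ENNReal.ofReal (D * discreteL2Norm ξ (g - B)) :=
      hNik.trans (by gcongr)
    _ ≤ ENNReal.ofReal H * ENNReal.ofReal (D * (2 * r)) := by
      gcongr; exact discreteL2Norm_sub_le_two_mul ξ hr hfg hbest
    _ = ENNReal.ofReal (H * (D * (2 * r))) := (ENNReal.ofReal_mul hH).symm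
  calc eLpNorm (f - B) p μ = eLpNorm ((f - g) + (g - B)) p μ := by rw [sub_add_sub_cancel]
    _ ≤ eLpNorm (f - g) p μ + eLpNorm (g - B) p μ := eLpNorm_add_le hfg_meas hgB_meas hp
    _ ≤ ENNReal.ofReal r + ENNReal.ofReal (H * (D * (2 * r))) :=
      add_le_add (eLpNorm_le_ofReal_of_forall_norm_le p hfg) hgB_le
    _ = ENNReal.ofReal ((2 * D * H + 1) * r) := by
      rw [← ENNReal.ofReal_add hr (by positivity)]; ring_nf

theorem best_discrete_approx_recovery_general
    {Ω : Type*} [TopologicalSpace Ω] [CompactSpace Ω]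
    [MeasurableSpace Ω] [BorelSpace Ω] (μ : Measure Ω) [IsProbabilityMeasure μ]
    (p : ℝ) (hp2 : 2 ≤ p) (N v m : ℕ)
    (φ : Fin N → Ω → ℂ) (hφ : ∀ j, Continuous (φ j))
    (Sv : ℕ → Set (Ω → ℂ))
    (hSv : ∀ u, Sv u = {g | ∃ Q : Finset (Fin N), ∃ c : Fin N → ℂ,
      Q.card ≤ u ∧ g = fun x => ∑ j ∈ Q, c j * φ j x})
    (H D : ℝ) (hH : 0 ≤ H) (hD : 0 ≤ D)
    (hNik : ∀ g ∈ Sv (2 * v),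
      eLpNorm g (ENNReal.ofReal p) μ ≤ ENNReal.ofReal H * eLpNorm g 2 μ)
    (ξ : Fin m → Ω)
    (hdisc : ∀ g ∈ Sv (2 * v),
      eLpNorm g 2 μ ≤ ENNReal.ofReal
        (D * Real.sqrt ((1 / m) * ∑ j, ‖g (ξ j)‖ ^ 2)))
    (f : Ω → ℂ) (hf : Continuous f)
    (B : Ω → ℂ) (hB : B ∈ Sv v)
    (hbest : ∀ g ∈ Sv v,
      Real.sqrt ((1 / m) * ∑ j, ‖f (ξ j) - B (ξ j)‖ ^ 2) ≤
        Real.sqrt ((1 / m) * ∑ j, ‖f (ξ j) - g (ξ j)‖ ^ 2)) :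
    eLpNorm (f - B) (ENNReal.ofReal p) μ ≤
      ENNReal.ofReal ((2 * D * H + 1) *
        sInf {r : ℝ | ∃ g ∈ Sv v, r = ⨆ x, ‖f x - g x‖}) := by
  obtain rfl : Sv = sparseSpan φ := funext hSv
  have hp : 1 ≤ ENNReal.ofReal p := ENNReal.one_le_ofReal.2 (by linarith)
  have hBc : Continuous B := continuous_of_mem_sparseSpan hφ hB
  refine le_ofReal_mul_csInf ?_ ?_ (by positivity) ?_
  · exact ⟨_, 0, zero_mem_sparseSpan v, rfl⟩
  · exact ⟨0, by rintro _ ⟨g, -, rfl⟩; exact Real.iSup_nonneg fun x => norm_nonneg _⟩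
  rintro _ ⟨g, hg, rfl⟩
  have hgc : Continuous g := continuous_of_mem_sparseSpan hφ hg
  have hgB : g - B ∈ sparseSpan φ (2 * v) := two_mul v ▸ sub_mem_sparseSpan hg hB
  exact eLpNorm_sub_le_of_discreteL2Norm_le ξ hp (hf.sub hgc).aestronglyMeasurable
    (hgc.sub hBc).aestronglyMeasurable (Real.iSup_nonneg fun x => norm_nonneg _) hH hD
    (norm_le_iSup_norm (hf.sub hgc)) (hNik _ hgB) (hdisc _ hgB) (hbest g hg)

/-- Theorem 3.3 of [VT203]: if `D_N ⊂ C(Ω)` satisfies the `2v`-term Nikol'skii inequality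
`NI(2,p,H,2v)` and the point set `ξ` provides the one-sided `L₂`-universal discretization
with constant `D` for `Σ_{2v}(D_N)`, then for any continuous `f` a best `v`-term
approximant `B` of `f` in the discrete norm `L₂(ξ)` satisfies
`‖f - B‖_{L_p(μ)} ≤ (2DH+1) σ_v(f, D_N)_∞`. -/
theorem best_discrete_approx_recovery
    {Ω : Type*} [TopologicalSpace Ω] [CompactSpace Ω] [Nonempty Ω]
    [MeasurableSpace Ω] [BorelSpace Ω] (μ : Measure Ω) [IsProbabilityMeasure μ]
    (p : ℝ) (hp2 : 2 ≤ p) (N v m : ℕ) (hm : 1 ≤ m) (hvN : 2 * v ≤ N)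
    (φ : Fin N → Ω → ℂ) (hφ : ∀ j, Continuous (φ j))
    (Sv : ℕ → Set (Ω → ℂ))
    (hSv : ∀ u, Sv u = {g | ∃ Q : Finset (Fin N), ∃ c : Fin N → ℂ,
      Q.card ≤ u ∧ g = fun x => ∑ j ∈ Q, c j * φ j x})
    (H D : ℝ) (hH : 0 ≤ H) (hD : 0 ≤ D)
    (hNik : ∀ g ∈ Sv (2 * v),
      eLpNorm g (ENNReal.ofReal p) μ ≤ ENNReal.ofReal H * eLpNorm g 2 μ)
    (ξ : Fin m → Ω)
    (hdisc : ∀ g ∈ Sv (2 * v),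
      eLpNorm g 2 μ ≤ ENNReal.ofReal
        (D * Real.sqrt ((1 / m) * ∑ j, ‖g (ξ j)‖ ^ 2)))
    (f : Ω → ℂ) (hf : Continuous f)
    (B : Ω → ℂ) (hB : B ∈ Sv v)
    (hbest : ∀ g ∈ Sv v,
      Real.sqrt ((1 / m) * ∑ j, ‖f (ξ j) - B (ξ j)‖ ^ 2) ≤
        Real.sqrt ((1 / m) * ∑ j, ‖f (ξ j) - g (ξ j)‖ ^ 2)) :
    eLpNorm (f - B) (ENNReal.ofReal p) μ ≤
      ENNReal.ofReal ((2 * D * H + 1) *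
        sInf {r : ℝ | ∃ g ∈ Sv v, r = ⨆ x, ‖f x - g x‖}) :=
  best_discrete_approx_recovery_general μ p hp2 N v m φ hφ Sv hSv H D hH hD hNik ξ hdisc f hf B hB
    hbest
end

section
/- Let X be a Banach space whose modulus of smoothness satisfies η(X, w) ≤ γ w^q for some 1 < q ≤ 2 and γ > 0, over the complex scalars. Let D be a system of elements of X with ‖g‖_X ≤ 1 for all g ∈ D, and let A_1(D) be the set of f = ∑_i a_i g_i with g_i ∈ D and ∑_i |a_i| ≤ 1. Then there is a constant C(q, γ) such that for all v ∈ ℕ, sup_{f ∈ A_1(D)} σ_v(f, D)_X ≤ C(q, γ) (v+1)^{1/q − 1}, where σ_v(f, D)_X is the best v-term approximation error of f with respect to D in X. -/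
/-!
Writing `aC i = ‖aC i‖ * u i` with `‖u i‖ ≤ 1` makes `f` a real convex combination of `0` and
the vectors `u i • g i` of the unit ball, so it suffices to run the relaxed greedy algorithm in
the underlying real space. Given an approximant `p`, let `φ` be a norming functional of `f - p`;
some `σ` among `0` and the `u i • g i` has `φ σ` almost as large as `φ f`. Smoothness gives
`‖x + z‖ ≤ ‖x‖ + φ z + 2γ‖z‖^q‖x‖^(1-q)` for `x = (1 - θ)(f - p)`, `z = θ(f - σ)`, and with
`θ = 2/t` this carries the bound `A (t - 1)^(1/q-1)` on `‖f - p‖` over to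
`A t^(1/q-1)` on `‖f - ((1 - θ) p + θ σ)‖`, at the cost of one more term, as soon as
`2γ 8^q ≤ A^q`; hence `A = 8 (1 + 2γ)^(1/q)`.
-/

open Finset

/-- `η(X, w) ≤ γ w ^ q` for all `w > 0`, `η` being the modulus of smoothness. -/
def ModulusOfSmoothnessLE (X : Type*) [NormedAddCommGroup X] [NormedSpace ℝ X] (γ q : ℝ) : Prop :=
  ∀ w : ℝ, 0 < w → ∀ x y : X, ‖x‖ = 1 → ‖y‖ = 1 →
    (‖x + w • y‖ + ‖x - w • y‖) / 2 - 1 ≤ γ * w ^ q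

theorem exists_mem_insert_zero_range_apply_sub_le {X ι : Type*} [NormedAddCommGroup X]
    [NormedSpace ℝ X] (φ : StrongDual ℝ X) {h : ι → X} {c : ι → ℝ} (hc0 : ∀ i, 0 ≤ c i)
    (hc : Summable c) (hc1 : ∑' i, c i ≤ 1) {f : X} (hf : HasSum (fun i => c i • h i) f)
    {ε : ℝ} (hε : 0 < ε) : ∃ σ ∈ insert 0 (Set.range h), φ (f - σ) ≤ ε := by
  by_cases hφf : φ f ≤ ε
  · exact ⟨0, Set.mem_insert _ _, by simpa using hφf⟩
  by_contra! hne
  have hi : ∀ i, φ (h i) ≤ φ f - ε := fun i => by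
    have := hne (h i) (Or.inr ⟨i, rfl⟩)
    rw [map_sub] at this
    linarith
  have hφsum : HasSum (fun i => c i * φ (h i)) (φ f) := by simpa using hf.mapL φ
  have hle : φ f ≤ (∑' i, c i) * (φ f - ε) := by
    rw [← tsum_mul_right]
    exact hasSum_le (fun i => mul_le_mul_of_nonneg_left (hi i) (hc0 i)) hφsum
      (hc.mul_right _).hasSum
  nlinarith

theorem greedy_bound_step {q γ A t E : ℝ} (hq : 1 < q) (hγ : 0 ≤ γ) (hA : 0 < A)
    (hAq : 2 * γ * 8 ^ q ≤ A ^ q) (ht : 4 ≤ t) (hE : A * t ^ (1 / q - 1) < E)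
    (hE_prev : E ≤ A * (t - 1) ^ (1 / q - 1)) :
    (1 - 2 / t) * E + 2 / t * (A * t ^ (1 / q - 1) / 4)
      + 2 * γ * (4 / t) ^ q * ((1 - 2 / t) * E) ^ (1 - q) ≤ A * t ^ (1 / q - 1) := by
  set s := A * t ^ (1 / q - 1) with hs
  clear_value s
  have hq0 : 0 < q := by linarith
  have ht0 : 0 < t := by linarith
  have hq' : 0 < 1 / q := by positivity
  have hs0 : 0 < s := by rw [hs]; positivity
  have hfirst : (1 - 2 / t) * E ≤ s - s / t := by
    have hpow : (t - 1) ^ (1 / q - 1) * (t - 1) ≤ t ^ (1 / q - 1) * t := by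
      rw [← Real.rpow_add_one (by linarith), ← Real.rpow_add_one ht0.ne']
      exact Real.rpow_le_rpow (by linarith) (by linarith) (by linarith)
    have h0 : 0 ≤ (t - 1) ^ (1 / q - 1) := Real.rpow_nonneg (by linarith) _
    have h1 : 0 ≤ t ^ (1 / q - 1) := Real.rpow_nonneg ht0.le _
    have hmid : (t - 2) * (t - 1) ^ (1 / q - 1) ≤ (t - 1) * t ^ (1 / q - 1) := by
      nlinarith [mul_le_mul_of_nonneg_left hpow (by linarith : (0:ℝ) ≤ t - 2)]
    calc (1 - 2 / t) * E ≤ (1 - 2 / t) * (A * (t - 1) ^ (1 / q - 1)) :=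
          mul_le_mul_of_nonneg_left hE_prev (by rw [sub_nonneg, div_le_one ht0]; linarith)
      _ = A * ((t - 2) * (t - 1) ^ (1 / q - 1)) / t := by field_simp
      _ ≤ A * ((t - 1) * t ^ (1 / q - 1)) / t := by gcongr
      _ = s - s / t := by rw [hs]; field_simp
  have hthird : 2 * γ * (4 / t) ^ q * ((1 - 2 / t) * E) ^ (1 - q) ≤ s / (2 * t) := by
    have hts : (t * s) ^ q = A ^ q * t := by
      rw [hs, show t * (A * t ^ (1 / q - 1)) = A * t ^ (1 / q) by
          rw [Real.rpow_sub_one ht0.ne']; field_simp,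
        Real.mul_rpow (by linarith) (by positivity), ← Real.rpow_mul ht0.le,
        one_div_mul_cancel hq0.ne', Real.rpow_one]
    have hy : s / 2 ≤ (1 - 2 / t) * E := by
      have : 2 / t ≤ 1 / 2 := by rw [div_le_iff₀ ht0]; linarith
      nlinarith
    calc 2 * γ * (4 / t) ^ q * ((1 - 2 / t) * E) ^ (1 - q)
        ≤ 2 * γ * (4 / t) ^ q * (s / 2) ^ (1 - q) := by
          gcongr ?_ * ?_
          exact Real.rpow_le_rpow_of_nonpos (half_pos hs0) hy (by linarith)
      _ = γ * 8 ^ q * s / (t * s) ^ q := by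
          have h8 : (8:ℝ) ^ q = 4 ^ q * 2 ^ q := by
            rw [← Real.mul_rpow (by norm_num) (by norm_num)]; norm_num
          rw [Real.rpow_sub (half_pos hs0), Real.rpow_one, Real.div_rpow (by norm_num) ht0.le,
            Real.div_rpow hs0.le (by norm_num), Real.mul_rpow ht0.le hs0.le, h8]
          field_simp
      _ ≤ s / (2 * t) := by
          rw [hts, div_le_div_iff₀ (by positivity) (by positivity)]
          nlinarith [mul_le_mul_of_nonneg_right hAq (by positivity : 0 ≤ s * t)]
  have hsecond : 2 / t * (s / 4) = s / (2 * t) := by ring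
  have hhalf : s / t = 2 * (s / (2 * t)) := by field_simp
  linarith

namespace ModulusOfSmoothnessLE

variable {X : Type*} [NormedAddCommGroup X] [NormedSpace ℝ X] {γ q : ℝ}

theorem norm_add_add_norm_sub_le (hX : ModulusOfSmoothnessLE X γ q) (hq : q ≠ 0) {x : X}
    (hx : x ≠ 0) (z : X) :
    ‖x + z‖ + ‖x - z‖ ≤ 2 * ‖x‖ + 2 * γ * ‖z‖ ^ q * ‖x‖ ^ (1 - q) := by
  rcases eq_or_ne z 0 with rfl | hz
  · simp [Real.zero_rpow hq, two_mul]
  have ha : 0 < ‖x‖ := norm_pos_iff.2 hx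
  have hb : 0 < ‖z‖ := norm_pos_iff.2 hz
  have key := hX (‖z‖ / ‖x‖) (by positivity) (‖x‖⁻¹ • x) (‖z‖⁻¹ • z)
    (norm_smul_inv_norm hx) (norm_smul_inv_norm hz)
  have hw : (‖z‖ / ‖x‖) • ‖z‖⁻¹ • z = ‖x‖⁻¹ • z := by
    rw [smul_smul, div_mul_eq_mul_div, mul_inv_cancel₀ hb.ne', one_div]
  rw [hw, ← smul_add, ← smul_sub, norm_smul, norm_smul, norm_inv, norm_norm,
    Real.div_rpow hb.le ha.le] at key
  have hpow : ‖x‖ ^ (1 - q) = ‖x‖ / ‖x‖ ^ q := by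
    rw [Real.rpow_sub ha, Real.rpow_one]
  rw [hpow]
  field_simp at key ⊢
  linarith

theorem norm_add_le (hX : ModulusOfSmoothnessLE X γ q) (hq : q ≠ 0) {x : X} (hx : x ≠ 0)
    {φ : StrongDual ℝ X} (hφ : ‖φ‖ ≤ 1) (hφx : φ x = ‖x‖) (z : X) :
    ‖x + z‖ ≤ ‖x‖ + φ z + 2 * γ * ‖z‖ ^ q * ‖x‖ ^ (1 - q) := by
  have hsub : ‖x‖ - φ z ≤ ‖x - z‖ := by
    calc ‖x‖ - φ z = φ (x - z) := by rw [map_sub, hφx]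
      _ ≤ ‖φ (x - z)‖ := Real.le_norm_self _
      _ ≤ ‖x - z‖ := by simpa using φ.le_of_opNorm_le hφ (x - z)
  linarith [hX.norm_add_add_norm_sub_le hq hx z]

theorem norm_sub_smul_add_smul_le (hX : ModulusOfSmoothnessLE X γ q) (hq : 0 < q)
    (hγ : 0 ≤ γ) {f p σ : X} (hfp : f ≠ p) {φ : StrongDual ℝ X} (hφ : ‖φ‖ ≤ 1)
    (hφfp : φ (f - p) = ‖f - p‖) {θ ε : ℝ} (hθ0 : 0 ≤ θ) (hθ1 : θ < 1)
    (hσ : φ (f - σ) ≤ ε) (hfσ : ‖f - σ‖ ≤ 2) :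
    ‖f - ((1 - θ) • p + θ • σ)‖ ≤ (1 - θ) * ‖f - p‖ + θ * ε
      + 2 * γ * (2 * θ) ^ q * ((1 - θ) * ‖f - p‖) ^ (1 - q) := by
  have hsplit : f - ((1 - θ) • p + θ • σ) = (1 - θ) • (f - p) + θ • (f - σ) := by module
  have hx : (1 - θ) • (f - p) ≠ 0 := smul_ne_zero (by linarith) (sub_ne_zero.2 hfp)
  have hnx : ‖(1 - θ) • (f - p)‖ = (1 - θ) * ‖f - p‖ := by
    rw [norm_smul, Real.norm_of_nonneg (by linarith)]
  have hφx : φ ((1 - θ) • (f - p)) = ‖(1 - θ) • (f - p)‖ := by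
    rw [map_smul, hφfp, hnx, smul_eq_mul]
  have hz : ‖θ • (f - σ)‖ ≤ 2 * θ := by
    rw [norm_smul, Real.norm_of_nonneg hθ0, mul_comm]
    exact mul_le_mul_of_nonneg_right hfσ hθ0
  rw [hsplit]
  refine (hX.norm_add_le hq.ne' hx hφ hφx _).trans ?_
  rw [hnx, map_smul, smul_eq_mul]
  gcongr

theorem exists_greedy_step (hX : ModulusOfSmoothnessLE X γ q) (hq : 1 < q) (hγ : 0 ≤ γ) {A t : ℝ}
    (hA : 8 ≤ A) (hAq : 2 * γ * 8 ^ q ≤ A ^ q) (ht : 2 ≤ t) {K : Set X} (h0K : (0 : X) ∈ K)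
    (hK : K ⊆ Metric.closedBall 0 1) {f : X} (hf : f ∈ Metric.closedBall (0 : X) 1)
    -- `f` lies in the weakly closed convex hull of `K`
    (hfK : ∀ φ : StrongDual ℝ X, ∀ ε > 0, ∃ σ ∈ K, φ (f - σ) ≤ ε)
    {p : X} (hp : p ∈ Metric.closedBall (0 : X) 1) (hfp : ‖f - p‖ ≤ A * (t - 1) ^ (1 / q - 1)) :
    ∃ σ ∈ K, ∃ θ ∈ Set.Icc (0 : ℝ) 1, ‖f - ((1 - θ) • p + θ • σ)‖ ≤ A * t ^ (1 / q - 1) := by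
  by_cases hsmall : ‖f - p‖ ≤ A * t ^ (1 / q - 1)
  · exact ⟨0, h0K, 0, ⟨le_rfl, zero_le_one⟩, by simpa using hsmall⟩
  push Not at hsmall
  have ht0 : 0 < t := by linarith
  have hball : ∀ x ∈ Metric.closedBall (0 : X) 1, ‖f - x‖ ≤ 2 := fun x hx => by
    rw [mem_closedBall_zero_iff] at hf hx
    linarith [norm_sub_le f x]
  have ht4 : 4 ≤ t := by
    have h1 : t ^ (-1 : ℝ) ≤ t ^ (1 / q - 1) := Real.rpow_le_rpow_of_exponent_le (by linarith)
      (by linarith [one_div_pos.2 (by linarith : 0 < q)])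
    rw [Real.rpow_neg_one] at h1
    have : A * t⁻¹ < 2 := by nlinarith [hball p hp]
    rw [← div_eq_mul_inv, div_lt_iff₀ ht0] at this
    linarith
  obtain ⟨φ, hφ, hφfp⟩ := exists_dual_vector'' ℝ (f - p)
  obtain ⟨σ, hσK, hσ⟩ := hfK φ (A * t ^ (1 / q - 1) / 4) (by positivity)
  have hfp0 : f ≠ p := sub_ne_zero.1 (norm_pos_iff.1 (lt_of_le_of_lt (by positivity) hsmall))
  refine ⟨σ, hσK, 2 / t, ⟨by positivity, by rw [div_le_one ht0]; linarith⟩, ?_⟩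
  calc ‖f - ((1 - 2 / t) • p + (2 / t) • σ)‖
      ≤ (1 - 2 / t) * ‖f - p‖ + 2 / t * (A * t ^ (1 / q - 1) / 4)
        + 2 * γ * (2 * (2 / t)) ^ q * ((1 - 2 / t) * ‖f - p‖) ^ (1 - q) :=
        hX.norm_sub_smul_add_smul_le (by linarith) hγ hfp0 hφ hφfp (by positivity)
          (by rw [div_lt_one ht0]; linarith) hσ (hball σ (hK hσK))
    _ ≤ A * t ^ (1 / q - 1) := by
        rw [show 2 * (2 / t) = 4 / t by ring]
        exact greedy_bound_step hq hγ (by linarith) hAq ht4 hsmall hfp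

theorem exists_sparse_linearCombination_approx (hX : ModulusOfSmoothnessLE X γ q) (hq : 1 < q)
    (hγ : 0 ≤ γ) {ι : Type*} {h : ι → X} (hh : ∀ i, ‖h i‖ ≤ 1) {c : ι → ℝ} (hc0 : ∀ i, 0 ≤ c i)
    (hc : Summable c) (hc1 : ∑' i, c i ≤ 1) {f : X} (hf : HasSum (fun i => c i • h i) f)
    (m : ℕ) :
    ∃ b : ι →₀ ℝ, #b.support ≤ m ∧ ‖f - Finsupp.linearCombination ℝ h b‖
      ≤ 8 * (1 + 2 * γ) ^ (1 / q) * ((m : ℝ) + 1) ^ (1 / q - 1) := by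
  classical
  set A := 8 * (1 + 2 * γ) ^ (1 / q)
  have hA : 8 ≤ A :=
    le_mul_of_one_le_right (by norm_num) (Real.one_le_rpow (by linarith) (by positivity))
  have hAq : 2 * γ * 8 ^ q ≤ A ^ q := by
    rw [Real.mul_rpow (by norm_num) (by positivity), ← Real.rpow_mul (by linarith),
      one_div_mul_cancel (by linarith), Real.rpow_one]
    nlinarith [Real.rpow_pos_of_pos (by norm_num : (0 : ℝ) < 8) q]
  have hK : insert 0 (Set.range h) ⊆ Metric.closedBall 0 1 := by
    rintro _ (rfl | ⟨i, rfl⟩) <;> simp [hh]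
  have hf1 : f ∈ Metric.closedBall (0 : X) 1 := by
    refine mem_closedBall_zero_iff.2 ((hf.norm_le_of_bounded hc.hasSum fun i => ?_).trans hc1)
    rw [norm_smul, Real.norm_of_nonneg (hc0 i)]
    exact mul_le_of_le_one_right (hc0 i) (hh i)
  suffices ∀ m : ℕ, ∃ b : ι →₀ ℝ, #b.support ≤ m ∧
      Finsupp.linearCombination ℝ h b ∈ Metric.closedBall 0 1 ∧
      ‖f - Finsupp.linearCombination ℝ h b‖ ≤ A * ((m : ℝ) + 1) ^ (1 / q - 1) by
    obtain ⟨b, hbm, -, hb⟩ := this m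
    exact ⟨b, hbm, hb⟩
  intro m
  induction m with
  | zero =>
    exact ⟨0, by simp, by simp, by simpa using (mem_closedBall_zero_iff.1 hf1).trans (by linarith)⟩
  | succ m ih =>
    obtain ⟨b, hbm, hb1, hbf⟩ := ih
    obtain ⟨σ, hσK, θ, ⟨hθ0, hθ1⟩, hle⟩ := hX.exists_greedy_step hq hγ hA hAq (t := m + 2)
      (le_add_of_nonneg_left m.cast_nonneg) (Set.mem_insert _ _) hK hf1
      (fun φ _ hε => exists_mem_insert_zero_range_apply_sub_le φ hc0 hc hc1 hf hε) hb1
      (by convert hbf using 3; ring)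
    obtain ⟨d, hd, rfl⟩ : ∃ d : ι →₀ ℝ, #d.support ≤ 1 ∧ Finsupp.linearCombination ℝ h d = σ := by
      rcases hσK with rfl | ⟨j, rfl⟩
      exacts [⟨0, by simp, by simp⟩,
        ⟨Finsupp.single j 1, (card_le_card Finsupp.support_single_subset).trans (by simp),
          by simp⟩]
    refine ⟨(1 - θ) • b + θ • d, ?_, ?_, ?_⟩
    · calc #((1 - θ) • b + θ • d).support ≤ #(b.support ∪ d.support) :=
            card_le_card (Finsupp.support_add.trans
              (union_subset_union Finsupp.support_smul Finsupp.support_smul))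
        _ ≤ m + 1 := (card_union_le _ _).trans (by omega)
    · rw [map_add, map_smul, map_smul]
      exact convex_closedBall 0 1 hb1 (hK hσK) (by linarith) hθ0 (by ring)
    · rw [map_add, map_smul, map_smul]
      push_cast
      convert hle using 3
      ring

end ModulusOfSmoothnessLE

theorem vterm_approx_A1_general (q γ : ℝ) (hq1 : 1 < q) (hγ : 0 < γ) :
    ∃ C : ℝ, 0 < C ∧
      ∀ (X : Type) (_ : NormedAddCommGroup X) (_ : NormedSpace ℂ X)
        (_ : CompleteSpace X),
        (∀ w : ℝ, 0 < w → ∀ x y : X, ‖x‖ = 1 → ‖y‖ = 1 →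
          (‖x + w • y‖ + ‖x - w • y‖) / 2 - 1 ≤ γ * w ^ q) →
        ∀ (D : Set X), (∀ g ∈ D, ‖g‖ ≤ 1) →
        ∀ (f : X) (g : ℕ → X) (aC : ℕ → ℂ), (∀ i, g i ∈ D) →
          (Summable fun i => ‖aC i‖) →
          (∑' i, ‖aC i‖) ≤ 1 →
          HasSum (fun i => aC i • g i) f →
        ∀ v : ℕ, ∃ (s : Finset ℕ) (c : ℕ → ℂ) (h : ℕ → X),
          s.card ≤ v ∧ (∀ i ∈ s, h i ∈ D) ∧
          ‖f - ∑ i ∈ s, c i • h i‖ ≤ C * ((v : ℝ) + 1) ^ (1 / q - 1) := by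
  refine ⟨8 * (1 + 2 * γ) ^ (1 / q), by positivity, ?_⟩
  intro X _ _ _ hX D hD f g aC hgD hsum hsum1 hf v
  set u : ℕ → ℂ := fun i => aC i / ‖aC i‖
  have hsmul : ∀ (i : ℕ) (r : ℝ), r • u i • g i = ((r : ℂ) * u i) • g i := fun i r => by
    rw [← smul_smul, Complex.coe_smul]
  have hu : ∀ i, (‖aC i‖ : ℂ) * u i = aC i := fun i => by
    rcases eq_or_ne (aC i) 0 with h | h
    · simp [u, h]
    · exact mul_div_cancel₀ _ (by simpa using h)
  have hh : ∀ i, ‖u i • g i‖ ≤ 1 := fun i => by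
    rw [norm_smul]
    exact mul_le_one₀ (by rw [norm_div, Complex.norm_of_nonneg (norm_nonneg _)]; exact div_self_le_one _) (norm_nonneg _) (hD _ (hgD i))
  obtain ⟨b, hbv, hb⟩ :=
    ModulusOfSmoothnessLE.exists_sparse_linearCombination_approx hX hq1 hγ.le hh
      (fun i => norm_nonneg _) hsum hsum1 (by simpa only [hsmul, hu] using hf) v
  refine ⟨b.support, fun i => b i * u i, g, hbv, fun i _ => hgD i, ?_⟩
  simpa only [Finsupp.linearCombination_apply, Finsupp.sum, hsmul] using hb

/-- Lemma: if a complex Banach space `X` has modulus of smoothness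
`η(X,w) ≤ γ w^q`, `1 < q ≤ 2`, and `D` is a system with `‖g‖ ≤ 1` for `g ∈ D`, then
there is `C(q,γ)` such that every `f ∈ A₁(D)` admits, for every `v ∈ ℕ`, a `v`-term
approximant with error at most `C(q,γ)(v+1)^{1/q-1}`, i.e.
`σ_v(A₁(D), D)_X ≤ C(q,γ)(v+1)^{1/q-1}`. -/
theorem vterm_approx_A1 (q γ : ℝ) (hq1 : 1 < q) (hq2 : q ≤ 2) (hγ : 0 < γ) :
    ∃ C : ℝ, 0 < C ∧
      ∀ (X : Type) (_ : NormedAddCommGroup X) (_ : NormedSpace ℂ X)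
        (_ : CompleteSpace X),
        (∀ w : ℝ, 0 < w → ∀ x y : X, ‖x‖ = 1 → ‖y‖ = 1 →
          (‖x + w • y‖ + ‖x - w • y‖) / 2 - 1 ≤ γ * w ^ q) →
        ∀ (D : Set X), (∀ g ∈ D, ‖g‖ ≤ 1) →
        ∀ (f : X) (g : ℕ → X) (aC : ℕ → ℂ), (∀ i, g i ∈ D) →
          (Summable fun i => ‖aC i‖) →
          (∑' i, ‖aC i‖) ≤ 1 →
          HasSum (fun i => aC i • g i) f →
        ∀ v : ℕ, ∃ (s : Finset ℕ) (c : ℕ → ℂ) (h : ℕ → X),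
          s.card ≤ v ∧ (∀ i ∈ s, h i ∈ D) ∧
          ‖f - ∑ i ∈ s, c i • h i‖ ≤ C * ((v : ℝ) + 1) ^ (1 / q - 1) :=
  vterm_approx_A1_general q γ hq1 hγ
end

section
/- Let 2 ≤ p < ∞. The modulus of smoothness of L_p(Ω, μ) satisfies η(L_p, w) ≤ (p − 1) w² / 2 for all w > 0; and for 1 ≤ p ≤ 2 it satisfies η(L_p, w) ≤ w^p / p. -/
/-!
Both bounds integrate a two-point inequality for real numbers. For `p ≥ 2` it is
`|a + b| ^ p + |a - b| ^ p ≤ 2 (a² + (p - 1) b²) ^ (p / 2)`: by homogeneity and symmetry it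
reduces to `b = t a` with `0 ≤ t ≤ 1`, where the logarithm of the ratio of the two sides is
antitone in `t`. Integrating it and applying Minkowski's inequality in `L^{p/2}` to `x²` and
`(p - 1) z²` gives `‖x + z‖ ^ p + ‖x - z‖ ^ p ≤ 2 (‖x‖² + (p - 1) ‖z‖²) ^ (p / 2)`. For
`1 ≤ p ≤ 2`, Clarkson's inequality `|a + b| ^ p + |a - b| ^ p ≤ 2 (|a| ^ p + |b| ^ p)` integrates
directly. In both cases the power mean inequality bounds `(‖x + w y‖ + ‖x - w y‖) / 2` by a `p`-th
root, and Bernoulli's inequality `(1 + s) ^ r ≤ 1 + r s` for `0 ≤ r ≤ 1` concludes.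
-/

open Real Set MeasureTheory
open scoped ENNReal

lemma rpow_eq_rpow_sub_one_mul {x : ℝ} (hx : x ≠ 0) (s : ℝ) : x ^ s = x ^ (s - 1) * x := by
  rw [← Real.rpow_add_one hx, sub_add_cancel]

lemma hasDerivAt_one_add_rpow {s : ℝ} (hs : 1 ≤ s) (x : ℝ) :
    HasDerivAt (fun u : ℝ => (1 + u) ^ s) (s * (1 + x) ^ (s - 1)) x := by
  simpa using ((hasDerivAt_id x).const_add 1).rpow_const (p := s) (Or.inr hs)

lemma hasDerivAt_one_sub_rpow {s : ℝ} (hs : 1 ≤ s) (x : ℝ) :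
    HasDerivAt (fun u : ℝ => (1 - u) ^ s) (-(s * (1 - x) ^ (s - 1))) x := by
  simpa using ((hasDerivAt_id x).const_sub 1).rpow_const (p := s) (Or.inr hs)

lemma one_sub_mul_mul_one_add_rpow_le {s t : ℝ} (hs : 1 ≤ s) (ht₀ : 0 ≤ t) (ht₁ : t ≤ 1) :
    (1 - s * t) * (1 + t) ^ s ≤ (1 + s * t) * (1 - t) ^ s := by
  let h : ℝ → ℝ := fun u => (1 + s * u) * (1 - u) ^ s - (1 - s * u) * (1 + u) ^ s
  have hd : ∀ x, HasDerivAt h (s * (1 - x) ^ s + (1 + s * x) * -(s * (1 - x) ^ (s - 1))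
      - (-s * (1 + x) ^ s + (1 - s * x) * (s * (1 + x) ^ (s - 1)))) x := fun x =>
    ((((hasDerivAt_id x).const_mul s).const_add 1).mul (hasDerivAt_one_sub_rpow hs x)).sub
      ((((hasDerivAt_id x).const_mul s).const_sub 1).mul (hasDerivAt_one_add_rpow hs x))
      |>.congr_deriv (by simp)
  have hmono : MonotoneOn h (Icc 0 1) := by
    refine monotoneOn_of_deriv_nonneg (convex_Icc 0 1)
      (HasDerivAt.continuousOn fun x _ => hd x)
      (fun x _ => (hd x).differentiableAt.differentiableWithinAt) fun x hx => ?_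
    rw [interior_Icc] at hx
    obtain ⟨hx₀, hx₁⟩ := hx
    have hpow : (1 - x) ^ (s - 1) ≤ (1 + x) ^ (s - 1) :=
      Real.rpow_le_rpow (by linarith) (by linarith) (by linarith)
    rw [(hd x).deriv, rpow_eq_rpow_sub_one_mul (by linarith : 1 - x ≠ 0),
      rpow_eq_rpow_sub_one_mul (by linarith : 1 + x ≠ 0)]
    calc (0 : ℝ) ≤ s * (1 + s) * x * ((1 + x) ^ (s - 1) - (1 - x) ^ (s - 1)) := by
          have : 0 ≤ s * (1 + s) * x := by positivity
          exact mul_nonneg this (sub_nonneg.2 hpow)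
      _ = _ := by ring
  simpa [h] using hmono ⟨le_rfl, zero_le_one⟩ ⟨ht₀, ht₁⟩ ht₀

lemma one_add_rpow_add_one_sub_rpow_le {p t : ℝ} (hp : 2 ≤ p) (ht₀ : 0 ≤ t) (ht₁ : t ≤ 1) :
    (1 + t) ^ p + (1 - t) ^ p ≤ 2 * (1 + (p - 1) * t ^ 2) ^ (p / 2) := by
  have hp₁ : 1 ≤ p := by linarith
  have hN : ∀ u ∈ Icc (0 : ℝ) 1, 0 < (1 + u) ^ p + (1 - u) ^ p := fun u ⟨hu₀, hu₁⟩ =>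
    add_pos_of_pos_of_nonneg (by positivity) (Real.rpow_nonneg (by linarith) p)
  have hM : ∀ u ∈ Icc (0 : ℝ) 1, 0 < 1 + (p - 1) * u ^ 2 := fun u _ => by nlinarith [sq_nonneg u]
  -- `L' ≤ 0` is the previous lemma for `s = p - 1`
  let L : ℝ → ℝ := fun u => log ((1 + u) ^ p + (1 - u) ^ p) - p / 2 * log (1 + (p - 1) * u ^ 2)
  have hd : ∀ x ∈ Icc (0 : ℝ) 1, HasDerivAt L
      ((p * (1 + x) ^ (p - 1) + -(p * (1 - x) ^ (p - 1))) / ((1 + x) ^ p + (1 - x) ^ p)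
        - p / 2 * ((p - 1) * (2 * x) / (1 + (p - 1) * x ^ 2))) x := fun x hx =>
    (((hasDerivAt_one_add_rpow hp₁ x).add (hasDerivAt_one_sub_rpow hp₁ x)).log (hN x hx).ne').sub
      ((((hasDerivAt_pow 2 x).const_mul (p - 1)).const_add 1 |>.congr_deriv (by simp)).log
        (hM x hx).ne' |>.const_mul (p / 2))
  have hanti : AntitoneOn L (Icc 0 1) := by
    refine antitoneOn_of_deriv_nonpos (convex_Icc 0 1)
      (HasDerivAt.continuousOn fun x hx => hd x hx)
      (fun x hx => (hd x (interior_subset hx)).differentiableAt.differentiableWithinAt)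
      fun x hx => ?_
    have hx' := interior_subset hx
    rw [interior_Icc] at hx
    obtain ⟨hx₀, hx₁⟩ := hx
    have key := one_sub_mul_mul_one_add_rpow_le (by linarith : 1 ≤ p - 1) hx₀.le hx₁.le
    rw [(hd x hx').deriv, sub_nonpos, mul_div_assoc', div_le_div_iff₀ (hN x hx') (hM x hx'),
      rpow_eq_rpow_sub_one_mul (by linarith : 1 - x ≠ 0) p,
      rpow_eq_rpow_sub_one_mul (by linarith : 1 + x ≠ 0) p]
    nlinarith
  have hL := hanti ⟨le_rfl, zero_le_one⟩ ⟨ht₀, ht₁⟩ ht₀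
  have hpos : 0 < (1 + (p - 1) * t ^ 2) ^ (p / 2) := Real.rpow_pos_of_pos (hM t ⟨ht₀, ht₁⟩) _
  rw [← Real.log_le_log_iff (hN t ⟨ht₀, ht₁⟩) (by positivity), Real.log_mul two_ne_zero hpos.ne',
    Real.log_rpow (hM t ⟨ht₀, ht₁⟩)]
  simp only [L] at hL
  norm_num at hL
  linarith

lemma abs_one_add_rpow_add_abs_one_sub_rpow_le {p t : ℝ} (hp : 2 ≤ p) (ht : |t| ≤ 1) :
    |1 + t| ^ p + |1 - t| ^ p ≤ 2 * (1 + (p - 1) * t ^ 2) ^ (p / 2) := by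
  obtain ⟨ht₁, ht₂⟩ := abs_le.1 ht
  rw [abs_of_nonneg (by linarith : 0 ≤ 1 + t), abs_of_nonneg (by linarith : 0 ≤ 1 - t)]
  rcases le_total 0 t with h | h
  · exact one_add_rpow_add_one_sub_rpow_le hp h ht₂
  · have h' := one_add_rpow_add_one_sub_rpow_le (t := -t) hp (by linarith) (by linarith)
    rwa [← sub_eq_add_neg, sub_neg_eq_add, neg_sq, add_comm] at h'

lemma abs_add_rpow_add_abs_sub_rpow_le_of_abs_le {p a b : ℝ} (hp : 2 ≤ p) (hba : |b| ≤ |a|) :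
    |a + b| ^ p + |a - b| ^ p ≤ 2 * (a ^ 2 + (p - 1) * b ^ 2) ^ (p / 2) := by
  rcases eq_or_ne a 0 with rfl | ha
  · have hb : b = 0 := abs_nonpos_iff.1 (by simpa using hba)
    simp [hb, Real.zero_rpow (by linarith : p ≠ 0), Real.zero_rpow (by linarith : p / 2 ≠ 0)]
  have key := abs_one_add_rpow_add_abs_one_sub_rpow_le hp
    (by rwa [abs_div, div_le_one (abs_pos.2 ha)] : |b / a| ≤ 1)
  have hsq : (a ^ 2) ^ (p / 2) = |a| ^ p := by
    rw [← sq_abs, ← Real.rpow_natCast, ← Real.rpow_mul (abs_nonneg a)]; ring_nf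
  calc |a + b| ^ p + |a - b| ^ p = |a| ^ p * (|1 + b / a| ^ p + |1 - b / a| ^ p) := by
        rw [mul_add, ← Real.mul_rpow (abs_nonneg _) (abs_nonneg _),
          ← Real.mul_rpow (abs_nonneg _) (abs_nonneg _), ← abs_mul, ← abs_mul, mul_add, mul_sub,
          mul_one, mul_div_cancel₀ b ha]
    _ ≤ |a| ^ p * (2 * (1 + (p - 1) * (b / a) ^ 2) ^ (p / 2)) := by gcongr
    _ = 2 * (a ^ 2 + (p - 1) * b ^ 2) ^ (p / 2) := by
        rw [← hsq, mul_left_comm, ← Real.mul_rpow (sq_nonneg a) (by nlinarith [sq_nonneg (b / a)])]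
        congr 2
        field_simp

lemma abs_add_rpow_add_abs_sub_rpow_le_of_two_le {p : ℝ} (hp : 2 ≤ p) (a b : ℝ) :
    |a + b| ^ p + |a - b| ^ p ≤ 2 * (a ^ 2 + (p - 1) * b ^ 2) ^ (p / 2) := by
  rcases le_total |b| |a| with hba | hab
  · exact abs_add_rpow_add_abs_sub_rpow_le_of_abs_le hp hba
  · have hsq : a ^ 2 ≤ b ^ 2 := sq_le_sq.2 hab
    calc |a + b| ^ p + |a - b| ^ p = |b + a| ^ p + |b - a| ^ p := by
          rw [add_comm b a, abs_sub_comm b a]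
      _ ≤ 2 * (b ^ 2 + (p - 1) * a ^ 2) ^ (p / 2) :=
        abs_add_rpow_add_abs_sub_rpow_le_of_abs_le hp hab
      _ ≤ 2 * (a ^ 2 + (p - 1) * b ^ 2) ^ (p / 2) := by
        gcongr 2 * ?_ ^ _
        · nlinarith [sq_nonneg a]
        · nlinarith

lemma add_div_two_rpow_le {x y r : ℝ} (hx : 0 ≤ x) (hy : 0 ≤ y) (hr : 1 ≤ r) :
    ((x + y) / 2) ^ r ≤ (x ^ r + y ^ r) / 2 := by
  have := (convexOn_rpow hr).2 hx hy (by norm_num : (0 : ℝ) ≤ 1 / 2)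
    (by norm_num : (0 : ℝ) ≤ 1 / 2) (by norm_num)
  simp only [smul_eq_mul, one_div_mul_eq_div] at this
  rwa [add_div, add_div]

lemma add_div_two_le_rpow_inv_of_rpow_add_rpow_le {a b c p : ℝ} (ha : 0 ≤ a) (hb : 0 ≤ b)
    (hp : 1 ≤ p) (h : a ^ p + b ^ p ≤ 2 * c) : (a + b) / 2 ≤ c ^ p⁻¹ := by
  have hc : 0 ≤ c := by nlinarith [Real.rpow_nonneg ha p, Real.rpow_nonneg hb p]
  exact (Real.le_rpow_inv_iff_of_pos (by positivity) hc (by linarith)).2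
    ((add_div_two_rpow_le ha hb hp).trans (by linarith))

lemma abs_add_rpow_add_abs_sub_rpow_le_of_le_two {p : ℝ} (hp₁ : 1 ≤ p) (hp₂ : p ≤ 2) (a b : ℝ) :
    |a + b| ^ p + |a - b| ^ p ≤ 2 * (|a| ^ p + |b| ^ p) := by
  have hp₀ : 0 < p := by linarith
  have hsq : ∀ c : ℝ, (|c| ^ p) ^ (p / 2)⁻¹ = c ^ 2 := fun c => by
    rw [← Real.rpow_mul (abs_nonneg c), inv_div, mul_div_cancel₀ _ hp₀.ne', Real.rpow_two, sq_abs]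
  -- power mean inequality with exponent `2 / p ≥ 1`, then subadditivity of `t ↦ t ^ (p / 2)`
  have hmean : ((|a + b| ^ p + |a - b| ^ p) / 2) ^ (p / 2)⁻¹ ≤ a ^ 2 + b ^ 2 := by
    calc _ ≤ ((|a + b| ^ p) ^ (p / 2)⁻¹ + (|a - b| ^ p) ^ (p / 2)⁻¹) / 2 :=
          add_div_two_rpow_le (by positivity) (by positivity)
            (by rw [inv_div, le_div_iff₀ hp₀]; linarith)
      _ = a ^ 2 + b ^ 2 := by rw [hsq, hsq]; ring
  have hsub : (a ^ 2 + b ^ 2) ^ (p / 2) ≤ |a| ^ p + |b| ^ p := by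
    calc _ ≤ (a ^ 2) ^ (p / 2) + (b ^ 2) ^ (p / 2) :=
          Real.rpow_add_le_add_rpow (sq_nonneg a) (sq_nonneg b) (by positivity) (by linarith)
      _ = |a| ^ p + |b| ^ p := by
          rw [← hsq a, ← hsq b, Real.rpow_inv_rpow (by positivity) (by positivity),
            Real.rpow_inv_rpow (by positivity) (by positivity)]
  rw [Real.rpow_inv_le_iff_of_pos (by positivity) (by positivity) (by positivity)] at hmean
  linarith

lemma mul_sq_rpow_div_two {c : ℝ} (hc : 0 ≤ c) (t p : ℝ) :
    (c * t ^ 2) ^ (p / 2) = c ^ (p / 2) * |t| ^ p := by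
  rw [Real.mul_rpow hc (sq_nonneg t), ← sq_abs, ← Real.rpow_natCast, ← Real.rpow_mul (abs_nonneg t)]
  ring_nf

namespace MeasureTheory.Lp

variable {Ω : Type*} [MeasurableSpace Ω] {μ : Measure Ω} {p : ℝ}

lemma aemeasurable_ofReal_abs_rpow (f : Lp ℝ (ENNReal.ofReal p) μ) :
    AEMeasurable (fun a => ENNReal.ofReal (|f a| ^ p)) μ :=
  ((Lp.aestronglyMeasurable f).aemeasurable.abs.pow_const p).ennreal_ofReal

variable [Fact (1 ≤ ENNReal.ofReal p)]

lemma ofReal_norm_rpow (f : Lp ℝ (ENNReal.ofReal p) μ) :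
    ENNReal.ofReal (‖f‖ ^ p) = ∫⁻ a, ENNReal.ofReal (|f a| ^ p) ∂μ := by
  have hp : 0 < p := by linarith [ENNReal.one_le_ofReal.1 (Fact.out : 1 ≤ ENNReal.ofReal p)]
  rw [← ENNReal.ofReal_rpow_of_nonneg (norm_nonneg f) hp.le, ofReal_norm, enorm_def,
    eLpNorm_eq_eLpNorm' (by simpa using hp) ENNReal.ofReal_ne_top, ENNReal.toReal_ofReal hp.le,
    ← lintegral_rpow_enorm_eq_rpow_eLpNorm' hp]
  simp_rw [Real.enorm_eq_ofReal_abs, ENNReal.ofReal_rpow_of_nonneg (abs_nonneg _) hp.le]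

lemma ofReal_norm_add_rpow_add_norm_sub_rpow (x z : Lp ℝ (ENNReal.ofReal p) μ) :
    ENNReal.ofReal (‖x + z‖ ^ p + ‖x - z‖ ^ p) =
      ∫⁻ a, ENNReal.ofReal (|x a + z a| ^ p + |x a - z a| ^ p) ∂μ := by
  rw [ENNReal.ofReal_add (by positivity) (by positivity), ofReal_norm_rpow, ofReal_norm_rpow,
    ← lintegral_add_left' (aemeasurable_ofReal_abs_rpow _)]
  refine lintegral_congr_ae ?_
  filter_upwards [coeFn_add x z, coeFn_sub x z] with a hadd hsub
  rw [hadd, hsub, Pi.add_apply, Pi.sub_apply, ENNReal.ofReal_add (by positivity) (by positivity)]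

theorem norm_add_rpow_add_norm_sub_rpow_le_of_le_two (hp : p ≤ 2)
    (x z : Lp ℝ (ENNReal.ofReal p) μ) :
    ‖x + z‖ ^ p + ‖x - z‖ ^ p ≤ 2 * (‖x‖ ^ p + ‖z‖ ^ p) := by
  rw [← ENNReal.ofReal_le_ofReal_iff (by positivity), ofReal_norm_add_rpow_add_norm_sub_rpow,
    ENNReal.ofReal_mul zero_le_two, ENNReal.ofReal_add (by positivity) (by positivity),
    ofReal_norm_rpow, ofReal_norm_rpow, ← lintegral_add_left' (aemeasurable_ofReal_abs_rpow _),
    ← lintegral_const_mul' _ _ ENNReal.ofReal_ne_top]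
  refine lintegral_mono fun a => ?_
  rw [← ENNReal.ofReal_add (by positivity) (by positivity), ← ENNReal.ofReal_mul zero_le_two]
  exact ENNReal.ofReal_le_ofReal
    (abs_add_rpow_add_abs_sub_rpow_le_of_le_two (ENNReal.one_le_ofReal.1 Fact.out) hp _ _)

lemma lintegral_ofReal_mul_sq_rpow {c : ℝ} (hc : 0 ≤ c) (f : Lp ℝ (ENNReal.ofReal p) μ) :
    (∫⁻ a, ENNReal.ofReal (c * f a ^ 2) ^ (p / 2) ∂μ) ^ (2 / p) = ENNReal.ofReal (c * ‖f‖ ^ 2) := by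
  have hp : 0 < p := by linarith [ENNReal.one_le_ofReal.1 (Fact.out : 1 ≤ ENNReal.ofReal p)]
  have hpt : ∀ t : ℝ, ENNReal.ofReal (c * t ^ 2) ^ (p / 2) =
      ENNReal.ofReal (c ^ (p / 2)) * ENNReal.ofReal (|t| ^ p) := fun t => by
    rw [ENNReal.ofReal_rpow_of_nonneg (by positivity) (by positivity), mul_sq_rpow_div_two hc,
      ENNReal.ofReal_mul (by positivity)]
  simp_rw [hpt]
  rw [lintegral_const_mul' _ _ ENNReal.ofReal_ne_top, ← ofReal_norm_rpow, ← abs_norm, ← hpt,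
    ← ENNReal.rpow_mul, show p / 2 * (2 / p) = 1 by field_simp, ENNReal.rpow_one, abs_norm]

lemma lintegral_ofReal_sq_add_mul_sq_rpow_le {c : ℝ} (hp : 2 ≤ p) (hc : 0 ≤ c)
    (x z : Lp ℝ (ENNReal.ofReal p) μ) :
    ∫⁻ a, ENNReal.ofReal ((x a ^ 2 + c * z a ^ 2) ^ (p / 2)) ∂μ ≤
      ENNReal.ofReal ((‖x‖ ^ 2 + c * ‖z‖ ^ 2) ^ (p / 2)) := by
  have hq : 0 < p / 2 := by linarith
  have hmink := ENNReal.lintegral_Lp_add_le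
    (f := fun a => ENNReal.ofReal (1 * x a ^ 2)) (g := fun a => ENNReal.ofReal (c * z a ^ 2))
    (by fun_prop) (by fun_prop) (by linarith : 1 ≤ p / 2)
  rw [one_div_div, lintegral_ofReal_mul_sq_rpow zero_le_one, lintegral_ofReal_mul_sq_rpow hc,
    ← ENNReal.ofReal_add (by positivity) (by positivity), one_mul] at hmink
  calc ∫⁻ a, ENNReal.ofReal ((x a ^ 2 + c * z a ^ 2) ^ (p / 2)) ∂μ
      = ((∫⁻ a, (ENNReal.ofReal (1 * x a ^ 2) + ENNReal.ofReal (c * z a ^ 2)) ^ (p / 2) ∂μ)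
          ^ (2 / p)) ^ (p / 2) := by
        rw [← ENNReal.rpow_mul, show 2 / p * (p / 2) = 1 by field_simp, ENNReal.rpow_one]
        refine lintegral_congr fun a => ?_
        rw [one_mul, ← ENNReal.ofReal_add (by positivity) (by positivity),
          ENNReal.ofReal_rpow_of_nonneg (by positivity) hq.le]
    _ ≤ ENNReal.ofReal (‖x‖ ^ 2 + c * ‖z‖ ^ 2) ^ (p / 2) := by gcongr; exact hmink
    _ = ENNReal.ofReal ((‖x‖ ^ 2 + c * ‖z‖ ^ 2) ^ (p / 2)) :=
        ENNReal.ofReal_rpow_of_nonneg (by positivity) hq.le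

theorem norm_add_rpow_add_norm_sub_rpow_le_of_two_le (hp : 2 ≤ p)
    (x z : Lp ℝ (ENNReal.ofReal p) μ) :
    ‖x + z‖ ^ p + ‖x - z‖ ^ p ≤ 2 * (‖x‖ ^ 2 + (p - 1) * ‖z‖ ^ 2) ^ (p / 2) := by
  have hc : 0 ≤ p - 1 := by linarith
  rw [← ENNReal.ofReal_le_ofReal_iff (by positivity), ofReal_norm_add_rpow_add_norm_sub_rpow,
    ENNReal.ofReal_mul zero_le_two]
  calc ∫⁻ a, ENNReal.ofReal (|x a + z a| ^ p + |x a - z a| ^ p) ∂μ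
      ≤ ∫⁻ a, 2 * ENNReal.ofReal ((x a ^ 2 + (p - 1) * z a ^ 2) ^ (p / 2)) ∂μ :=
        lintegral_mono fun a => by
          rw [← ENNReal.ofReal_ofNat 2, ← ENNReal.ofReal_mul zero_le_two]
          exact ENNReal.ofReal_le_ofReal (abs_add_rpow_add_abs_sub_rpow_le_of_two_le hp _ _)
    _ ≤ _ := by
        rw [lintegral_const_mul' _ _ ENNReal.ofNat_ne_top, ENNReal.ofReal_ofNat]
        gcongr
        exact lintegral_ofReal_sq_add_mul_sq_rpow_le hp hc x z

end MeasureTheory.Lp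

/-- Modulus of smoothness of `L_p`: for `2 ≤ p < ∞`, `η(L_p, w) ≤ (p-1)w²/2`, and for
`1 ≤ p ≤ 2`, `η(L_p, w) ≤ w^p/p`, where
`η(X,w) = sup_{‖x‖=‖y‖=1} [(‖x+wy‖+‖x-wy‖)/2 - 1]`. -/
theorem modulus_of_smoothness_Lp
    {Ω : Type*} [MeasurableSpace Ω] (μ : Measure Ω) (p : ℝ) (w : ℝ) (hw : 0 < w) :
    ((2 ≤ p) → ∀ x y : Lp ℝ (ENNReal.ofReal p) μ, ‖x‖ = 1 → ‖y‖ = 1 →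
      (‖x + w • y‖ + ‖x - w • y‖) / 2 - 1 ≤ (p - 1) * w ^ 2 / 2) ∧
    ((1 ≤ p) → (p ≤ 2) → ∀ x y : Lp ℝ (ENNReal.ofReal p) μ, ‖x‖ = 1 → ‖y‖ = 1 →
      (‖x + w • y‖ + ‖x - w • y‖) / 2 - 1 ≤ w ^ p / p) := by
  constructor
  · intro hp x y hx hy
    have : Fact (1 ≤ ENNReal.ofReal p) := ⟨ENNReal.one_le_ofReal.2 (by linarith)⟩
    have hwy : ‖w • y‖ = w := by rw [norm_smul, hy, mul_one, Real.norm_of_nonneg hw.le]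
    have h := Lp.norm_add_rpow_add_norm_sub_rpow_le_of_two_le hp x (w • y)
    rw [hx, hwy, one_pow] at h
    have hmid := add_div_two_le_rpow_inv_of_rpow_add_rpow_le (norm_nonneg _) (norm_nonneg _)
      (by linarith) h
    have hs : 0 ≤ (p - 1) * w ^ 2 := mul_nonneg (by linarith) (sq_nonneg w)
    rw [← Real.rpow_mul (by linarith), show p / 2 * p⁻¹ = 1 / 2 by field_simp] at hmid
    have hbern := rpow_one_add_le_one_add_mul_self (by linarith) (by norm_num : (0 : ℝ) ≤ 1 / 2)
      (by norm_num) (s := (p - 1) * w ^ 2)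
    linarith
  · intro hp₁ hp₂ x y hx hy
    have : Fact (1 ≤ ENNReal.ofReal p) := ⟨ENNReal.one_le_ofReal.2 hp₁⟩
    have hwy : ‖w • y‖ = w := by rw [norm_smul, hy, mul_one, Real.norm_of_nonneg hw.le]
    have h := Lp.norm_add_rpow_add_norm_sub_rpow_le_of_le_two hp₂ x (w • y)
    rw [hx, hwy, Real.one_rpow] at h
    have hmid := add_div_two_le_rpow_inv_of_rpow_add_rpow_le (norm_nonneg _) (norm_nonneg _) hp₁ h
    have hbern := rpow_one_add_le_one_add_mul_self
      (by linarith [Real.rpow_nonneg hw.le p] : -1 ≤ w ^ p) (by positivity : 0 ≤ p⁻¹)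
      (inv_le_one_of_one_le₀ hp₁)
    rw [inv_mul_eq_div] at hbern
    linarith
end
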